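/- Let θ_1 ≤ θ_2 ≤ … ≤ θ_N be real numbers with θ_N − θ_1 < π, and let i_0, i_1, …, i_p ∈ {1,…,N} be any finite sequence of indices with i_0 = 1 and i_p = N. Then Σ_{k=1}^p sin(θ_{min{i_{k−1}, i_k}} − θ_{max{i_{k−1}, i_k}}) ≤ −sin(θ_N − θ_1). -/

import Mathlib

open Real Finset

/-- Diameter: max minus min of a finite family of reals. -/
noncomputable def diam {N : ℕ} (v : Fin N → ℝ) : ℝ := (⨆ i, v i) - (⨅ i, v i)

/-- `S_c = Σ_{n=0}^{N-1} c^n`. -/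
noncomputable def Sc (N : ℕ) (c : ℝ) : ℝ := ∑ n ∈ Finset.range N, c ^ n

/-- `Y_c(z)`: difference of the two convex-type combinations of the nondecreasing
rearrangement of `z` (weights `c^{i-1}` and `c^{N-i}`), divided by `S_c`. -/
noncomputable def Yc {N : ℕ} (c : ℝ) (z : Fin N → ℝ) : ℝ :=
  (∑ i : Fin N, c ^ (i : ℕ) * z (Tuple.sort z i) -
   ∑ i : Fin N, c ^ (N - 1 - (i : ℕ)) * z (Tuple.sort z i)) / Sc N c

/-!
Write `d_k = θ_{max} - θ_{min}` for the length of the `k`-th step and `D = θ_N - θ_1`. The steps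
lie in `[0, D] ⊆ [0, π)` and, by telescoping, their total length is at least `D`. Concavity of
`sin` on `[0, π]` makes `sin x / x` antitone there, so `sin d_k ≥ (sin D / D) d_k`, and summing
gives `∑ sin d_k ≥ sin D`.
-/

lemma sub_le_sum_max_sub_min {α β : Type*} [LinearOrder α] [AddCommGroup β] [PartialOrder β]
    [IsOrderedAddMonoid β] {f : α → β} (hf : Monotone f) (idx : ℕ → α) (p : ℕ) :
    f (idx p) - f (idx 0) ≤
      ∑ k ∈ range p, (f (max (idx k) (idx (k + 1))) - f (min (idx k) (idx (k + 1)))) := by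
  rw [← sum_range_sub (fun k => f (idx k))]
  exact sum_le_sum fun k _ => sub_le_sub (hf (le_max_right _ _)) (hf (min_le_left _ _))

lemma sin_div_mul_le_sin {d D : ℝ} (hd : 0 ≤ d) (hdD : d ≤ D) (hDπ : D ≤ π) :
    sin D / D * d ≤ sin d := by
  rcases hd.eq_or_lt with rfl | hd
  · simp
  have hslope := strictConcaveOn_sin_Icc.concaveOn.antitoneOn_slope_gt (x := 0)
    (by simp [pi_pos.le]) ⟨⟨hd.le, hdD.trans hDπ⟩, hd⟩ ⟨⟨(hd.trans_le hdD).le, hDπ⟩, hd.trans_le hdD⟩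
    hdD
  simp only [slope_def_field, sin_zero, sub_zero] at hslope
  calc sin D / D * d ≤ sin d / d * d := by gcongr
    _ = sin d := div_mul_cancel₀ _ hd.ne'

lemma sin_le_sum_sin_of_le_sum {ι : Type*} {s : Finset ι} {d : ι → ℝ} {D : ℝ} (hD : 0 ≤ D)
    (hDπ : D ≤ π) (hd : ∀ i ∈ s, d i ∈ Set.Icc 0 D) (hsum : D ≤ ∑ i ∈ s, d i) :
    sin D ≤ ∑ i ∈ s, sin (d i) := by
  have hratio : 0 ≤ sin D / D := div_nonneg (sin_nonneg_of_nonneg_of_le_pi hD hDπ) hD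
  calc sin D = sin D / D * D := (div_mul_cancel_of_imp fun h => by simp [h]).symm
    _ ≤ sin D / D * ∑ i ∈ s, d i := by gcongr
    _ = ∑ i ∈ s, sin D / D * d i := mul_sum _ _ _
    _ ≤ ∑ i ∈ s, sin (d i) := sum_le_sum fun i hi => sin_div_mul_le_sin (hd i hi).1 (hd i hi).2 hDπ

/-- path estimate for ordered phases in a half circle. -/
theorem stmt5 {N : ℕ} (hN : 2 ≤ N) (θ : Fin N → ℝ) (hmono : Monotone θ)
    (hdiam : θ ⟨N - 1, by omega⟩ - θ ⟨0, by omega⟩ < π)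
    (p : ℕ) (idx : ℕ → Fin N)
    (hfirst : idx 0 = ⟨0, by omega⟩) (hlast : idx p = ⟨N - 1, by omega⟩) :
    ∑ k ∈ Finset.range p,
        Real.sin (θ (min (idx k) (idx (k + 1))) - θ (max (idx k) (idx (k + 1))))
      ≤ - Real.sin (θ ⟨N - 1, by omega⟩ - θ ⟨0, by omega⟩) := by
  set first : Fin N := ⟨0, by omega⟩
  set last : Fin N := ⟨N - 1, by omega⟩
  have hfirst_le (i : Fin N) : first ≤ i := Fin.mk_le_of_le_val (Nat.zero_le _)
  have hle_last (i : Fin N) : i ≤ last := Fin.le_iff_val_le_val.2 (by simp [last]; omega)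
  have hsteps (k : ℕ) : θ (max (idx k) (idx (k + 1))) - θ (min (idx k) (idx (k + 1))) ∈
      Set.Icc 0 (θ last - θ first) :=
    ⟨sub_nonneg.2 (hmono min_le_max), sub_le_sub (hmono (hle_last _)) (hmono (hfirst_le _))⟩
  have hlength := sub_le_sum_max_sub_min hmono idx p
  rw [hfirst, hlast] at hlength
  have key := sin_le_sum_sin_of_le_sum (sub_nonneg.2 (hmono (hfirst_le last))) hdiam.le
    (fun k _ => hsteps k) hlength
  simp_rw [← neg_sub (θ (max _ _)), sin_neg, sum_neg_distrib]
  exact neg_le_neg key
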